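/- The unit interval [0,1] with min as meet, sup as join, 1 as top, and the Gödel arrow as fuzzy relation R*(a,b) = (a → b) is a graded frame; in particular it satisfies all nine graded frame axioms. -/
import Mathlib


open unitInterval

instance : Fact ((0:ℝ) ≤ 1) := ⟨zero_le_one⟩

/-- The Gödel arrow on [0,1]. -/
noncomputable def godel (a b : I) : I := if a ≤ b then 1 else b

/-- Graded inclusion of fuzzy subsets of X. -/
noncomputable def grInc {X : Type*} (T1 T2 : X → I) : I := ⨅ x, godel (T1 x) (T2 x)

theorem stmt_13 :
    (∀ a : I, godel a a = 1) ∧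
    (∀ a b : I, godel a b = 1 → godel b a = 1 → a = b) ∧
    (∀ a b c : I, min (godel a b) (godel b c) ≤ godel a c) ∧
    (∀ a b : I, godel (min a b) a = 1 ∧ godel (min a b) b = 1) ∧
    (∀ a : I, godel a 1 = 1) ∧
    (∀ a b c : I, min (godel a b) (godel a c) = godel a (min b c)) ∧
    (∀ (S : Set I) (a : I), a ∈ S → godel a (sSup S) = 1) ∧
    (∀ (S : Set I) (b : I), (⨅ a ∈ S, godel a b) = godel (sSup S) b) ∧
    (∀ (S : Set I) (a : I),
      godel (min a (sSup S)) (sSup ((fun b => min a b) '' S)) = 1) := by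
  refine ⟨?_, ?_, ?_, ?_, ?_, ?_, ?_, ?_, ?_⟩
  · intro a; simp [godel]
  · intro a b h1 h2
    by_cases hab : a ≤ b
    · by_cases hba : b ≤ a
      · exact le_antisymm hab hba
      · rw [godel, if_neg hba] at h2
        exact le_antisymm hab (le_of_le_of_eq le_one' h2.symm)
    · rw [godel, if_neg hab] at h1
      exact absurd (le_of_le_of_eq le_one' h1.symm) hab
  · intro a b c
    rw [godel, godel, godel]
    split_ifs with hab hbc hac hac hbc hac hac
    · exact le_one'
    · exact absurd (hab.trans hbc) hac
    · exact le_one'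
    · exact min_le_right _ _
    · exact le_one'
    · exact (min_le_left _ _).trans hbc
    · exact le_one'
    · exact min_le_right _ _
  · intro a b
    exact ⟨by rw [godel, if_pos (min_le_left _ _)],
           by rw [godel, if_pos (min_le_right _ _)]⟩
  · intro a; rw [godel, if_pos le_one']
  · intro a b c
    rw [godel, godel, godel]
    rcases le_or_gt a b with hab | hab <;> rcases le_or_gt a c with hac | hac
    · rw [if_pos hab, if_pos hac, if_pos (le_min hab hac), min_self]
    · rw [if_pos hab, if_neg hac.not_ge,
        if_neg (fun hh => hac.not_ge (hh.trans (min_le_right _ _))),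
        min_eq_right le_one', min_eq_right (hac.le.trans hab)]
    · rw [if_neg hab.not_ge, if_pos hac,
        if_neg (fun hh => hab.not_ge (hh.trans (min_le_left _ _))),
        min_eq_left le_one', min_eq_left (hab.le.trans hac)]
    · rw [if_neg hab.not_ge, if_neg hac.not_ge,
        if_neg (fun hh => hab.not_ge (hh.trans (min_le_left _ _)))]
  · intro S a ha; rw [godel, if_pos (le_sSup ha)]
  · intro S b
    by_cases h : sSup S ≤ b
    · rw [godel, if_pos h]
      refine le_antisymm le_one' (le_iInf₂ fun a ha => ?_)
      rw [godel, if_pos ((le_sSup ha).trans h)]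
    · rw [godel, if_neg h]
      refine le_antisymm ?_ (le_iInf₂ fun a ha => ?_)
      · by_contra h'
        have hall : ∀ a ∈ S, a ≤ b := by
          intro a ha
          by_contra hab
          exact h' ((iInf₂_le a ha).trans (by rw [godel, if_neg hab]))
        exact h (sSup_le hall)
      · rw [godel]
        split_ifs
        · exact le_one'
        · exact le_refl _
  · intro S a
    rw [godel, if_pos]
    by_contra h
    rw [not_le] at h
    set t := sSup ((fun b => min a b) '' S) with ht
    have ht1 : t < a := lt_of_lt_of_le h (min_le_left _ _)
    have ht2 : t < sSup S := lt_of_lt_of_le h (min_le_right _ _)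
    have : ∃ b ∈ S, ¬ b ≤ t := by
      by_contra h'
      push_neg at h'
      exact absurd (sSup_le h') (not_le.mpr ht2)
    obtain ⟨b, hb, hbt⟩ := this
    have : min a b ≤ t := le_sSup ⟨b, hb, rfl⟩
    exact absurd this (not_le.mpr (lt_min ht1 (not_le.mp hbt)))
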